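/- arXiv:2601.13883 — 2 statements merged into one kernel-verified Lean document; each statement's English description precedes it below -/
import Mathlib

section
/- Assume (i) the reward r_m(s, a_m) of each group m depends only on the state and the group's own action, and is unaffected by the policies of other groups (in particular, the transition dynamics do not depend on actions), and (ii) the total reward decomposes as r(s,a) = ∑_{m=1}^M r_m(s, a_m). Then the joint policy π* = ∏_{m=1}^M π*_m is optimal for the joint discounted-reward maximization problem if and only if each π*_m is optimal for the group-m subproblem of maximizing E_{μ,π}[∑_t γ^t r_m(s_t, a_{t,m}) | π_{1:m−1}] given the policies π*_{1:m−1} of the preceding groups. -/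
section

variable {S : Type*} [Fintype S] {M : ℕ} {A : Fin M → Type*} [∀ m, Fintype (A m)]

/-- A sequential policy: group `m` selects its action conditionally on the state and on
the joint action (restricted below to earlier groups). -/
abbrev SeqPolicy (S : Type*) (A : Fin M → Type*) :=
  (m : Fin M) → S → ((i : Fin M) → A i) → A m → ℝ

/-- The conditioning of group `m` only uses the actions of the first `m-1` groups. -/
def PrefixDep (π : SeqPolicy S A) : Prop :=
  ∀ (m : Fin M) (s : S) (a a' : (i : Fin M) → A i),
    (∀ i : Fin M, i < m → a i = a' i) → π m s a = π m s a'

/-- A valid sequential policy family: prefix-dependent conditional distributions. -/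
def ValidSeq (π : SeqPolicy S A) : Prop :=
  PrefixDep π ∧ (∀ m s a b, 0 ≤ π m s a b) ∧ (∀ m s a, ∑ b : A m, π m s a b = 1)

/-- Induced joint policy `π(a|s) = ∏_m π_m(a_m | s, a_{1:m-1})`. -/
def jointPi (π : SeqPolicy S A) (s : S) (a : (i : Fin M) → A i) : ℝ :=
  ∏ m : Fin M, π m s a (a m)

/-- State marginal at time `t`; the transition kernel `P` does not depend on actions. -/
def sDist (μ : S → ℝ) (P : S → S → ℝ) : ℕ → S → ℝ
  | 0 => μ
  | t + 1 => fun s' => ∑ s : S, sDist μ P t s * P s s'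

/-- Discounted objective of group `m`: `E_{μ,π}[∑_t γ^t r_m(s_t, a_{t,m})]`. -/
noncomputable def Jm (μ : S → ℝ) (P : S → S → ℝ) (γ : ℝ)
    (rm : (m : Fin M) → S → A m → ℝ) (m : Fin M) (π : SeqPolicy S A) : ℝ :=
  ∑' t : ℕ, γ ^ t * ∑ s : S, sDist μ P t s *
    ∑ a : (i : Fin M) → A i, jointPi π s a * rm m s (a m)

/-- Joint discounted objective `E_{μ,π}[∑_t γ^t r(s_t, a_t)]`. -/
noncomputable def J (μ : S → ℝ) (P : S → S → ℝ) (γ : ℝ)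
    (r : S → ((i : Fin M) → A i) → ℝ) (π : SeqPolicy S A) : ℝ :=
  ∑' t : ℕ, γ ^ t * ∑ s : S, sDist μ P t s *
    ∑ a : (i : Fin M) → A i, jointPi π s a * r s a

end

/-!
Since the transitions ignore the actions, the state marginals `sDist μ P t` do not depend on the
policy, and since the reward is additive, `J = ∑ m, Jm m`, where `Jm m` sees the policy only through
the law of group `m`'s action at each state. That law is determined by the first `m` groups
(integrating out a later group leaves a sum unchanged when the integrand ignores it), and every
such law is also produced by the policy that plays it without looking at earlier groups.

So if `π*` is group-optimal, then for any `π'` and any `m`, letting group `m` of `π*` play the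
`m`-th marginal of `π'` shows `Jm m π' ≤ Jm m π*`, and summing gives joint optimality.
Conversely, a deviation of group `m` in which the later groups play their marginals under `π*`
changes only the `m`-th term of `J`, so joint optimality of `π*` gives group optimality.
-/

open Finset Function

section Averaging

variable {ι : Type*} [Fintype ι] [DecidableEq ι] {A : ι → Type*} [∀ i, Fintype (A i)]

theorem sum_apply_eval_eq_inv_card_mul_sum_sum (k : ι) (G : ((i : ι) → A i) → A k → ℝ)
    (hG : ∀ a b, G (update a k b) = G a) :
    ∑ a, G a (a k) = (Fintype.card (A k) : ℝ)⁻¹ * ∑ a, ∑ b, G a b := by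
  rcases isEmpty_or_nonempty (A k) with hk | hk
  · have : IsEmpty ((i : ι) → A i) := ⟨fun a => hk.false (a k)⟩
    simp
  let e : ((i : ι) → A i) × A k ≃ ((i : ι) → A i) × A k :=
    ⟨fun x => (update x.1 k x.2, x.1 k), fun x => (update x.1 k x.2, x.1 k),
      fun x => by simp, fun x => by simp⟩
  have hswap : ∑ x : ((i : ι) → A i) × A k, G x.1 x.2
      = ∑ x : ((i : ι) → A i) × A k, G x.1 (x.1 k) :=
    Fintype.sum_equiv e _ _ fun x => by simp [e, hG]
  rw [← Fintype.sum_prod_type', hswap, Fintype.sum_prod_type]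
  simp [← mul_sum, Fintype.card_pos.ne']

end Averaging

section SequentialPolicy

variable {S : Type*} {M : ℕ} {A : Fin M → Type*}

theorem PrefixDep.apply_update {π : SeqPolicy S A} (hπ : PrefixDep π)
    {j k : Fin M} (hjk : j ≤ k) (s : S) (a : (i : Fin M) → A i) (b : A k) :
    π j s (update a k b) = π j s a :=
  hπ j s _ _ fun _ hi => update_of_ne (hi.trans_le hjk).ne _ _

variable [∀ m, Fintype (A m)]

theorem ValidSeq.of_forall_exists {σ : SeqPolicy S A}
    (h : ∀ k, ∃ ρ : SeqPolicy S A, ValidSeq ρ ∧ σ k = ρ k) : ValidSeq σ := by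
  choose ρ hρ hσ using h
  refine ⟨fun k s a a' haa' => ?_, fun k s a b => ?_, fun k s a => ?_⟩ <;> rw [hσ k]
  · exact (hρ k).1 k s a a' haa'
  · exact (hρ k).2.1 k s a b
  · exact (hρ k).2.2 k s a

theorem jointPi_nonneg {π : SeqPolicy S A} (hπ : ValidSeq π) (s : S) (a : (i : Fin M) → A i) :
    0 ≤ jointPi π s a :=
  prod_nonneg fun j _ => hπ.2.1 j s a (a j)

open Classical in
noncomputable def marginal (π : SeqPolicy S A) (s : S) (k : Fin M) (b : A k) : ℝ :=
  ∑ a with a k = b, jointPi π s a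

theorem sum_jointPi_mul_apply (π : SeqPolicy S A) (s : S) (k : Fin M) (f : A k → ℝ) :
    ∑ a, jointPi π s a * f (a k) = ∑ b, marginal π s k b * f b := by
  classical
  simp only [marginal, sum_mul]
  rw [← sum_fiberwise univ (fun a => a k)]
  exact sum_congr rfl fun b _ => sum_congr rfl fun a ha => by rw [(mem_filter.1 ha).2]

noncomputable def marginalPolicy (π : SeqPolicy S A) : SeqPolicy S A :=
  fun k s _ => marginal π s k

/-- The joint law in which the groups from `n` on are replaced by uniformly random ones. -/
noncomputable def truncJoint (π : SeqPolicy S A) (s : S) (n : ℕ) (a : (i : Fin M) → A i) : ℝ :=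
  ∏ j : Fin M, if (j : ℕ) < n then π j s a (a j) else (Fintype.card (A j) : ℝ)⁻¹

theorem truncJoint_eq_jointPi (π : SeqPolicy S A) (s : S) : truncJoint π s M = jointPi π s :=
  funext fun _ => prod_congr rfl fun j _ => if_pos j.isLt

theorem sum_truncJoint_succ_mul {π : SeqPolicy S A} (hπ : PrefixDep π) (s : S) (k : Fin M)
    (F : ((i : Fin M) → A i) → ℝ) :
    ∑ a, truncJoint π s (k + 1) a * F a
      = ∑ a, truncJoint π s k a * ∑ b, π k s a b * F (update a k b) := by
  -- the factors other than the `k`-th, none of which looks at `a k`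
  set R : ((i : Fin M) → A i) → ℝ := fun a =>
    ∏ j ∈ univ.erase k, if (j : ℕ) < k then π j s a (a j) else (Fintype.card (A j) : ℝ)⁻¹
  have hR : ∀ a b, R (update a k b) = R a := fun a b => prod_congr rfl fun j hj => by
    have hjk := ne_of_mem_erase hj
    split_ifs with hlt
    · rw [hπ.apply_update (Fin.lt_def.2 hlt).le, update_of_ne hjk]
    · rfl
  have hsucc : ∀ a, truncJoint π s (k + 1) a = π k s a (a k) * R a := fun a => by
    rw [truncJoint, ← mul_prod_erase _ _ (mem_univ k), if_pos (k : ℕ).lt_succ_self]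
    refine congrArg _ (prod_congr rfl fun j hj => ?_)
    have hjk : (j : ℕ) ≠ k := Fin.val_ne_of_ne (ne_of_mem_erase hj)
    simp only [Nat.lt_succ_iff_lt_or_eq, hjk, or_false]
  have hk : ∀ a, truncJoint π s k a = (Fintype.card (A k) : ℝ)⁻¹ * R a := fun a => by
    rw [truncJoint, ← mul_prod_erase _ _ (mem_univ k), if_neg (lt_irrefl _)]
  calc ∑ a, truncJoint π s (k + 1) a * F a
      = ∑ a, (fun a b => π k s a b * R a * F (update a k b)) a (a k) := by
        simp only [hsucc, update_eq_self]
    _ = (Fintype.card (A k) : ℝ)⁻¹ * ∑ a, ∑ b, π k s a b * R a * F (update a k b) :=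
        sum_apply_eval_eq_inv_card_mul_sum_sum k (fun a b => π k s a b * R a * F (update a k b))
          fun a b => funext fun b' => by rw [hπ.apply_update le_rfl, hR, update_idem]
    _ = ∑ a, truncJoint π s k a * ∑ b, π k s a b * F (update a k b) := by
        simp only [hk, mul_sum, mul_assoc, mul_left_comm (R _)]

theorem sum_truncJoint_mul_of_le {π : SeqPolicy S A} (hπ : ValidSeq π) (s : S) {n N : ℕ}
    (hnN : n ≤ N) (hNM : N ≤ M) {F : ((i : Fin M) → A i) → ℝ}
    (hF : ∀ k : Fin M, n ≤ k → ∀ a b, F (update a k b) = F a) :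
    ∑ a, truncJoint π s N a * F a = ∑ a, truncJoint π s n a * F a := by
  induction N, hnN using Nat.le_induction with
  | base => rfl
  | succ N hnN ih =>
    have step := sum_truncJoint_succ_mul hπ.1 s ⟨N, hNM⟩ F
    simp only [hF ⟨N, hNM⟩ hnN, ← sum_mul, hπ.2.2, one_mul] at step
    rw [step, ih (Nat.le_of_succ_le hNM)]

theorem sum_jointPi_mul_apply_eq_sum_truncJoint {π : SeqPolicy S A} (hπ : ValidSeq π) (s : S)
    (k : Fin M) (f : A k → ℝ) :
    ∑ a, jointPi π s a * f (a k) = ∑ a, truncJoint π s (k + 1) a * f (a k) := by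
  rw [← truncJoint_eq_jointPi]
  exact sum_truncJoint_mul_of_le hπ s k.isLt le_rfl fun j hj a b =>
    by rw [update_of_ne (Fin.ne_of_lt (Fin.lt_def.2 hj))]

theorem sum_jointPi_mul_apply_congr {π ρ : SeqPolicy S A} (hπ : ValidSeq π) (hρ : ValidSeq ρ)
    (s : S) (k : Fin M) (h : ∀ j ≤ k, π j s = ρ j s) (f : A k → ℝ) :
    ∑ a, jointPi π s a * f (a k) = ∑ a, jointPi ρ s a * f (a k) := by
  rw [sum_jointPi_mul_apply_eq_sum_truncJoint hπ, sum_jointPi_mul_apply_eq_sum_truncJoint hρ]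
  refine sum_congr rfl fun a _ => congrArg (· * _) (prod_congr rfl fun j _ => ?_)
  split_ifs with hj
  · rw [h j (Fin.le_def.2 (Nat.le_of_lt_succ hj))]
  · rfl

variable [∀ i, Nonempty (A i)]

theorem sum_truncJoint {π : SeqPolicy S A} (hπ : ValidSeq π) (s : S) {n : ℕ} (hn : n ≤ M) :
    ∑ a, truncJoint π s n a = 1 := by
  have h := sum_truncJoint_mul_of_le hπ s (Nat.zero_le n) hn (F := fun _ => 1) fun _ _ _ _ => rfl
  simp only [mul_one] at h
  rw [h]
  simp only [truncJoint, Nat.not_lt_zero, if_false]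
  rw [sum_const, card_univ, Fintype.card_pi, nsmul_eq_mul, Nat.cast_prod, ← prod_mul_distrib]
  exact prod_eq_one fun i _ => mul_inv_cancel₀ (Nat.cast_ne_zero.2 Fintype.card_ne_zero)

theorem sum_jointPi {π : SeqPolicy S A} (hπ : ValidSeq π) (s : S) : ∑ a, jointPi π s a = 1 := by
  rw [← truncJoint_eq_jointPi]
  exact sum_truncJoint hπ s le_rfl

theorem sum_jointPi_mul_apply_of_forall_eq {π : SeqPolicy S A} (hπ : ValidSeq π) (s : S)
    (k : Fin M) {q : A k → ℝ} (hq : ∀ a, π k s a = q) (f : A k → ℝ) :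
    ∑ a, jointPi π s a * f (a k) = ∑ b, q b * f b := by
  rw [sum_jointPi_mul_apply_eq_sum_truncJoint hπ, sum_truncJoint_succ_mul hπ.1]
  simp only [hq, update_self, ← sum_mul, sum_truncJoint hπ s k.isLt.le, one_mul]

theorem ValidSeq.marginalPolicy {π : SeqPolicy S A} (hπ : ValidSeq π) :
    ValidSeq (marginalPolicy π) := by
  refine ⟨fun _ _ _ _ _ => rfl, fun k s _ b => ?_, fun k s _ => ?_⟩
  · exact sum_nonneg fun a _ => jointPi_nonneg hπ s a
  · show ∑ b, marginal π s k b = 1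
    simpa [sum_jointPi hπ s] using (sum_jointPi_mul_apply π s k fun _ => 1).symm

end SequentialPolicy

section Objective

variable {S : Type*} [Fintype S] {M : ℕ} {A : Fin M → Type*} [∀ m, Fintype (A m)]
  {μ : S → ℝ} {P : S → S → ℝ} {γ : ℝ}

theorem sum_abs_sDist_le (hP0 : ∀ s s', 0 ≤ P s s') (hP1 : ∀ s, ∑ s', P s s' = 1) (t : ℕ) :
    ∑ s, |sDist μ P t s| ≤ ∑ s, |μ s| := by
  induction t with
  | zero => exact le_rfl
  | succ t ih =>
    calc ∑ s', |sDist μ P (t + 1) s'| = ∑ s', |∑ s, sDist μ P t s * P s s'| := rfl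
      _ ≤ ∑ s', ∑ s, |sDist μ P t s| * P s s' := sum_le_sum fun s' _ =>
          (abs_sum_le_sum_abs _ _).trans_eq
            (sum_congr rfl fun s _ => by rw [abs_mul, abs_of_nonneg (hP0 s s')])
      _ = ∑ s, |sDist μ P t s| := by simp only [sum_comm (γ := S), ← mul_sum, hP1, mul_one]
      _ ≤ ∑ s, |μ s| := ih

theorem summable_discounted (hγ0 : 0 ≤ γ) (hγ1 : γ < 1) (hP0 : ∀ s s', 0 ≤ P s s')
    (hP1 : ∀ s, ∑ s', P s s' = 1) (x : S → ℝ) :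
    Summable fun t : ℕ => γ ^ t * ∑ s, sDist μ P t s * x s := by
  have hx : ∀ s, |x s| ≤ ∑ s', |x s'| := fun s =>
    single_le_sum (f := fun s => |x s|) (fun _ _ => abs_nonneg _) (mem_univ s)
  refine Summable.of_norm_bounded
    ((summable_geometric_of_lt_one hγ0 hγ1).mul_left ((∑ s, |μ s|) * ∑ s, |x s|)) fun t => ?_
  rw [Real.norm_eq_abs, abs_mul, abs_pow, abs_of_nonneg hγ0, mul_comm]
  gcongr
  calc |∑ s, sDist μ P t s * x s| ≤ ∑ s, |sDist μ P t s| * ∑ s', |x s'| :=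
        (abs_sum_le_sum_abs _ _).trans
          (sum_le_sum fun s _ => by rw [abs_mul]; gcongr; exact hx s)
    _ ≤ (∑ s, |μ s|) * ∑ s, |x s| := by
        rw [← sum_mul]
        exact mul_le_mul_of_nonneg_right (sum_abs_sDist_le hP0 hP1 t)
          (sum_nonneg fun _ _ => abs_nonneg _)

theorem J_eq_sum_Jm (hγ0 : 0 ≤ γ) (hγ1 : γ < 1) (hP0 : ∀ s s', 0 ≤ P s s')
    (hP1 : ∀ s, ∑ s', P s s' = 1) {r : S → ((i : Fin M) → A i) → ℝ}
    {rm : (m : Fin M) → S → A m → ℝ} (hdecomp : ∀ s a, r s a = ∑ m, rm m s (a m))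
    (π : SeqPolicy S A) : J μ P γ r π = ∑ m, Jm μ P γ rm m π := by
  unfold J Jm
  rw [← Summable.tsum_finsetSum fun m _ => summable_discounted hγ0 hγ1 hP0 hP1 _]
  refine tsum_congr fun t => ?_
  simp only [hdecomp, mul_sum]
  rw [sum_congr rfl fun s _ => sum_comm, sum_comm]

theorem Jm_congr {rm : (m : Fin M) → S → A m → ℝ} {m : Fin M} {π ρ : SeqPolicy S A}
    (h : ∀ s, ∑ a, jointPi π s a * rm m s (a m) = ∑ a, jointPi ρ s a * rm m s (a m)) :
    Jm μ P γ rm m π = Jm μ P γ rm m ρ := by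
  simp only [Jm, h]

end Objective

section Optimality

variable {S : Type*} [Fintype S] {M : ℕ} {A : Fin M → Type*} [∀ m, Fintype (A m)]
  {μ : S → ℝ} {P : S → S → ℝ} {γ : ℝ} {r : S → ((i : Fin M) → A i) → ℝ}
  {rm : (m : Fin M) → S → A m → ℝ}

def IsGroupOptimal (μ : S → ℝ) (P : S → S → ℝ) (γ : ℝ) (rm : (m : Fin M) → S → A m → ℝ)
    (π : SeqPolicy S A) (m : Fin M) : Prop :=
  ∀ πm' : S → ((i : Fin M) → A i) → A m → ℝ,
    ValidSeq (update π m πm') → Jm μ P γ rm m (update π m πm') ≤ Jm μ P γ rm m π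

def IsJointOptimal (μ : S → ℝ) (P : S → S → ℝ) (γ : ℝ) (r : S → ((i : Fin M) → A i) → ℝ)
    (π : SeqPolicy S A) : Prop :=
  ∀ π' : SeqPolicy S A, ValidSeq π' → J μ P γ r π' ≤ J μ P γ r π

variable [∀ i, Nonempty (A i)]

theorem IsGroupOptimal.Jm_le {π π' : SeqPolicy S A} {m : Fin M}
    (hopt : IsGroupOptimal μ P γ rm π m) (hπ : ValidSeq π) (hπ' : ValidSeq π') :
    Jm μ P γ rm m π' ≤ Jm μ P γ rm m π := by
  have hτ : ValidSeq (update π m (marginalPolicy π' m)) := ValidSeq.of_forall_exists fun k => by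
    rcases eq_or_ne k m with rfl | hk
    · exact ⟨_, hπ'.marginalPolicy, update_self ..⟩
    · exact ⟨_, hπ, update_of_ne hk ..⟩
  calc Jm μ P γ rm m π' = Jm μ P γ rm m (update π m (marginalPolicy π' m)) :=
        Jm_congr fun s => by
          rw [sum_jointPi_mul_apply_of_forall_eq hτ s m (q := marginal π' s m) fun a => by
            rw [update_self]; rfl, sum_jointPi_mul_apply]
    _ ≤ Jm μ P γ rm m π := hopt _ hτ

theorem IsJointOptimal.isGroupOptimal (hγ0 : 0 ≤ γ) (hγ1 : γ < 1) (hP0 : ∀ s s', 0 ≤ P s s')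
    (hP1 : ∀ s, ∑ s', P s s' = 1) (hdecomp : ∀ s a, r s a = ∑ m, rm m s (a m))
    {π : SeqPolicy S A} (hπ : ValidSeq π) (hopt : IsJointOptimal μ P γ r π) (m : Fin M) :
    IsGroupOptimal μ P γ rm π m := by
  intro πm' hupd
  -- the groups after `m` play their marginals under `π`, which leaves their objectives unchanged
  let σ : SeqPolicy S A := fun k => if k ≤ m then update π m πm' k else marginalPolicy π k
  have hσ : ValidSeq σ := ValidSeq.of_forall_exists fun k => by
    by_cases hk : k ≤ m
    · exact ⟨_, hupd, if_pos hk⟩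
    · exact ⟨_, hπ.marginalPolicy, if_neg hk⟩
  have hσm : Jm μ P γ rm m σ = Jm μ P γ rm m (update π m πm') :=
    Jm_congr fun s => sum_jointPi_mul_apply_congr hσ hupd s m (fun j hj => by simp [σ, hj]) _
  have hσk : ∀ k ≠ m, Jm μ P γ rm k σ = Jm μ P γ rm k π := by
    intro k hk
    rcases hk.lt_or_gt with hlt | hgt
    · refine Jm_congr fun s => sum_jointPi_mul_apply_congr hσ hπ s k (fun j hj => ?_) _
      simp [σ, hj.trans hlt.le, (hj.trans_lt hlt).ne]
    · refine Jm_congr fun s => ?_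
      rw [sum_jointPi_mul_apply_of_forall_eq hσ s k (q := marginal π s k) fun a => by
        simp [σ, hgt.not_ge, marginalPolicy], sum_jointPi_mul_apply]
  have hJ := hopt σ hσ
  rw [J_eq_sum_Jm hγ0 hγ1 hP0 hP1 hdecomp, J_eq_sum_Jm hγ0 hγ1 hP0 hP1 hdecomp, ← sub_nonpos,
    ← sum_sub_distrib, sum_eq_single m (fun k _ hk => by rw [hσk k hk, sub_self]) (by simp)] at hJ
  rw [← hσm]
  linarith

theorem IsJointOptimal.of_forall_isGroupOptimal (hγ0 : 0 ≤ γ) (hγ1 : γ < 1)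
    (hP0 : ∀ s s', 0 ≤ P s s') (hP1 : ∀ s, ∑ s', P s s' = 1)
    (hdecomp : ∀ s a, r s a = ∑ m, rm m s (a m)) {π : SeqPolicy S A} (hπ : ValidSeq π)
    (hopt : ∀ m, IsGroupOptimal μ P γ rm π m) : IsJointOptimal μ P γ r π := fun π' hπ' => by
  rw [J_eq_sum_Jm hγ0 hγ1 hP0 hP1 hdecomp, J_eq_sum_Jm hγ0 hγ1 hP0 hP1 hdecomp]
  exact sum_le_sum fun m _ => (hopt m).Jm_le hπ hπ'

end Optimality

section

variable {S : Type*} [Fintype S] {M : ℕ} {A : Fin M → Type*} [∀ m, Fintype (A m)]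

theorem optimality_preservation_general
    [DecidableEq (Fin M)]
    (μ : S → ℝ) (P : S → S → ℝ) (γ : ℝ)
    (hγ0 : 0 ≤ γ) (hγ1 : γ < 1)
    (hP0 : ∀ s s', 0 ≤ P s s') (hP1 : ∀ s, ∑ s' : S, P s s' = 1)
    (r : S → ((i : Fin M) → A i) → ℝ) (rm : (m : Fin M) → S → A m → ℝ)
    (hdecomp : ∀ s a, r s a = ∑ m : Fin M, rm m s (a m))
    (πstar : SeqPolicy S A) (hstar : ValidSeq πstar) :
    (∀ (m : Fin M) (πm' : S → ((i : Fin M) → A i) → A m → ℝ),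
        ValidSeq (Function.update πstar m πm') →
        Jm μ P γ rm m (Function.update πstar m πm') ≤ Jm μ P γ rm m πstar)
      ↔ (∀ π' : SeqPolicy S A, ValidSeq π' → J μ P γ r π' ≤ J μ P γ r πstar) := by
  -- `J` and `Jm` sum over `(i : Fin M) → A i` with the `Fintype` instance built from
  -- `instDecidableEqFin`, so the `Function.update`s must use that instance too
  obtain rfl : ‹DecidableEq (Fin M)› = instDecidableEqFin M := Subsingleton.elim _ _
  rcases isEmpty_or_nonempty ((i : Fin M) → A i) with hA | hA
  · simp [Jm, J]
  · have := Classical.nonempty_pi.1 hA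
    exact ⟨IsJointOptimal.of_forall_isGroupOptimal hγ0 hγ1 hP0 hP1 hdecomp hstar,
      IsJointOptimal.isGroupOptimal hγ0 hγ1 hP0 hP1 hdecomp hstar⟩

/-- Theorem 1, optimality preservation: with action-independent transitions
and additively decomposing reward, `π* = ∏_m π*_m` is optimal for the joint problem iff
each `π*_m` is optimal for the group-`m` subproblem given the preceding groups' policies. -/
theorem optimality_preservation
    [DecidableEq (Fin M)]
    (μ : S → ℝ) (P : S → S → ℝ) (γ : ℝ)
    (hγ0 : 0 ≤ γ) (hγ1 : γ < 1)
    (hμ0 : ∀ s, 0 ≤ μ s) (hμ1 : ∑ s : S, μ s = 1)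
    (hP0 : ∀ s s', 0 ≤ P s s') (hP1 : ∀ s, ∑ s' : S, P s s' = 1)
    (r : S → ((i : Fin M) → A i) → ℝ) (rm : (m : Fin M) → S → A m → ℝ)
    (hdecomp : ∀ s a, r s a = ∑ m : Fin M, rm m s (a m))
    (πstar : SeqPolicy S A) (hstar : ValidSeq πstar) :
    (∀ (m : Fin M) (πm' : S → ((i : Fin M) → A i) → A m → ℝ),
        ValidSeq (Function.update πstar m πm') →
        Jm μ P γ rm m (Function.update πstar m πm') ≤ Jm μ P γ rm m πstar)
      ↔ (∀ π' : SeqPolicy S A, ValidSeq π' → J μ P γ r π' ≤ J μ P γ r πstar) :=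
  optimality_preservation_general μ P γ hγ0 hγ1 hP0 hP1 r rm hdecomp πstar hstar

end
end

section
/- If a feasible point of the Lagrangian saddle-point problem exists, then for any sequence λ^{(j)} → ∞ componentwise (on constraints with positive cost), the optimizers θ^{(j)} ∈ argmax_θ L(λ^{(j)}, θ) satisfy: every limit point of the induced expected costs E_{d_{π_{θ^{(j)}}}⊗π_{θ^{(j)}}}[c_k] is ≤ 0 for all k; i.e., as the multipliers grow, maximizers of the relaxed problem approach feasibility of the constrained problem. Formally in a finite setting: if the constrained problem max{ J_r(θ) : J_{c_k}(θ) ≤ 0 ∀k } over a finite set Θ of policies is feasible, then there exists Λ such that for all λ with min_k λ_k ≥ Λ, every maximizer of L(λ,·) over Θ is feasible. -/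
/-!
Fix a feasible policy `θ₀`; its costs vanish, so `L(λ, θ₀) = J_r(θ₀)`. A maximizer `θ` of
`L(λ, ·)` therefore pays a penalty `∑ₖ λₖ J_{c_k}(θ)` of at most `J_r(θ) - J_r(θ₀)`.
Since `Θ` is finite, only finitely many ratios `(J_r(θ) - J_r(θ₀)) / J_{c_k}(θ)` occur, and
any `Λ` above all of them makes a single positive cost already too expensive.
-/

open Finset

lemma Finite.exists_ge_and_forall_lt {ι α : Type*} [Finite ι] [LinearOrder α] [NoMaxOrder α]
    (f : ι → α) (a : α) : ∃ Λ, a ≤ Λ ∧ ∀ i, f i < Λ := by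
  have : Nonempty α := ⟨a⟩
  obtain ⟨M, hM⟩ := Finite.bddAbove_range f
  obtain ⟨Λ, hΛ⟩ := exists_gt (max a M)
  exact ⟨Λ, (le_max_left a M).trans hΛ.le,
    fun i => (hM (Set.mem_range_self i)).trans_lt ((le_max_right a M).trans_lt hΛ)⟩

def lagrangian {Θ K : Type*} [Fintype K] (Jr : Θ → ℝ) (Jc : K → Θ → ℝ) (lam : K → ℝ)
    (θ : Θ) : ℝ :=
  Jr θ - ∑ k, lam k * Jc k θ

lemma penalty_le_of_lagrangian_le {Θ K : Type*} [Fintype K] (Jr : Θ → ℝ) (Jc : K → Θ → ℝ)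
    (lam : K → ℝ) {θ θ₀ : Θ} (hθ₀ : ∀ k, Jc k θ₀ = 0)
    (h : lagrangian Jr Jc lam θ₀ ≤ lagrangian Jr Jc lam θ) :
    ∑ k, lam k * Jc k θ ≤ Jr θ - Jr θ₀ := by
  simp only [lagrangian, hθ₀, mul_zero, sum_const_zero, sub_zero] at h
  linarith

theorem large_multipliers_force_feasibility_general
    {Θ K : Type*} [Fintype Θ] [Fintype K]
    (Jr : Θ → ℝ) (Jc : K → Θ → ℝ) (hJc : ∀ k θ, 0 ≤ Jc k θ)
    (hfeas : ∃ θ₀ : Θ, ∀ k, Jc k θ₀ ≤ 0) :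
    ∃ Λ : ℝ, ∀ lam : K → ℝ, (∀ k, Λ ≤ lam k) →
      ∀ θ : Θ,
        (∀ θ' : Θ, Jr θ' - ∑ k : K, lam k * Jc k θ' ≤ Jr θ - ∑ k : K, lam k * Jc k θ) →
        ∀ k, Jc k θ ≤ 0 := by
  obtain ⟨θ₀, hθ₀⟩ := hfeas
  have hθ₀_zero : ∀ k, Jc k θ₀ = 0 := fun k => (hθ₀ k).antisymm (hJc k θ₀)
  -- Where `Jc k θ = 0` the ratio is the junk value `0`; it is only used where `Jc k θ > 0`.
  obtain ⟨Λ, hΛ_nonneg, hΛ⟩ :=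
    Finite.exists_ge_and_forall_lt (fun p : Θ × K => (Jr p.1 - Jr θ₀) / Jc p.2 p.1) 0
  refine ⟨Λ, fun lam hlam θ hmax k => not_lt.mp fun hpos => ?_⟩
  have hpenalty := penalty_le_of_lagrangian_le Jr Jc lam hθ₀_zero (hmax θ₀)
  have hsingle : lam k * Jc k θ ≤ ∑ j, lam j * Jc j θ :=
    single_le_sum (fun j _ => mul_nonneg (hΛ_nonneg.trans (hlam j)) (hJc j θ)) (mem_univ k)
  have hratio : Jr θ - Jr θ₀ < Λ * Jc k θ := (div_lt_iff₀ hpos).mp (hΛ (θ, k))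
  have hscale : Λ * Jc k θ ≤ lam k * Jc k θ := mul_le_mul_of_nonneg_right (hlam k) hpos.le
  linarith

/-- finite setting. `Θ` is a finite set of policies, `J_r` the reward
objective, `J_{c_k} ≥ 0` the expected (truncated) costs, and
`L(λ,θ) = J_r(θ) - ∑_k λ_k J_{c_k}(θ)`. If the constrained problem is feasible, then
there exists `Λ` such that for all `λ` with `λ_k ≥ Λ` for every `k`, every maximizer of
`L(λ,·)` over `Θ` is feasible (`J_{c_k}(θ) ≤ 0` for all `k`). -/
theorem large_multipliers_force_feasibility
    {Θ K : Type*} [Fintype Θ] [Nonempty Θ] [Fintype K]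
    (Jr : Θ → ℝ) (Jc : K → Θ → ℝ) (hJc : ∀ k θ, 0 ≤ Jc k θ)
    (hfeas : ∃ θ₀ : Θ, ∀ k, Jc k θ₀ ≤ 0) :
    ∃ Λ : ℝ, ∀ lam : K → ℝ, (∀ k, Λ ≤ lam k) →
      ∀ θ : Θ,
        (∀ θ' : Θ, Jr θ' - ∑ k : K, lam k * Jc k θ' ≤ Jr θ - ∑ k : K, lam k * Jc k θ) →
        ∀ k, Jc k θ ≤ 0 :=
  large_multipliers_force_feasibility_general Jr Jc hJc hfeas
end
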